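/- arXiv:2306.07577 — 4 statements merged into one kernel-verified Lean document; each statement's English description precedes it below -/
import Mathlib

section
/- If X1, X2 are i.i.d. gamma random variables with shape α>0 and rate β>0, then E[|X1−X2|/(X1+X2)] = (2^{2α−1} · α · B(α,α))^{−1}, where B is the beta function. -/
/-!
Writing `U = X₂ / X₁`, the substitution `y = x u` turns the joint density into `x p(x) p(x u)`,
which in `x` is a multiple of the `Γ(2α, β (1 + u))` density; integrating `x` out shows that `U`
has the beta prime density `u^(α-1) (1 + u)^(-2α) / B(α, α)`. As `|X₁ - X₂| / (X₁ + X₂)` equals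
`|1 - U| / (1 + U)`, it remains to integrate `|1 - u| / (1 + u)` against this density. On either
side of `u = 1` the integrand is `± (u^α (1 + u)^(-2α))' / (α B(α, α))`, and the antiderivative
vanishes at `0` and at `∞` and equals `2^(-2α)` at `1`.
-/

open MeasureTheory ProbabilityTheory Real Set

/-- The beta function `B(p,q) = Γ(p)Γ(q)/Γ(p+q)`. -/
noncomputable def betaFun (p q : ℝ) : ℝ := Real.Gamma p * Real.Gamma q / Real.Gamma (p + q)

open Filter Topology
open scoped ENNReal

lemma lintegral_eq_setLIntegral_Ioi_zero {f : ℝ → ℝ≥0∞} (hf : ∀ x < 0, f x = 0) :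
    ∫⁻ x, f x = ∫⁻ x in Ioi 0, f x := by
  rw [setLIntegral_congr Ioi_ae_eq_Ici, setLIntegral_eq_of_support_subset]
  intro x hx
  by_contra hneg
  exact hx (hf x (not_le.1 hneg))

lemma setLIntegral_Ioi_zero_comp_mul_left {c : ℝ} (hc : 0 < c) (f : ℝ → ℝ≥0∞) :
    ∫⁻ y in Ioi 0, f y = ENNReal.ofReal c * ∫⁻ u in Ioi 0, f (c * u) := by
  have h := lintegral_image_eq_lintegral_abs_deriv_mul
    (measurableSet_Ioi (a := 0)) (fun _ _ => (hasDerivAt_const_mul c).hasDerivWithinAt)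
    (mul_right_injective₀ hc.ne').injOn f
  rw [image_mul_left_Ioi hc, mul_zero, abs_of_pos hc] at h
  rw [h, lintegral_const_mul' _ _ ENNReal.ofReal_ne_top]

section

variable {a : ℝ}

lemma hasDerivAt_rpow_mul_one_add_rpow {u : ℝ} (hu : 0 < u) :
    HasDerivAt (fun u : ℝ => u ^ a * (1 + u) ^ (-(2 * a)))
      (a * (u ^ (a - 1) * (1 + u) ^ (-(2 * a)) * ((1 - u) / (1 + u)))) u := by
  have h1u : 0 < 1 + u := by linarith
  have h1 : HasDerivAt (fun u : ℝ => u ^ a) (a * u ^ (a - 1)) u :=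
    hasDerivAt_rpow_const (Or.inl hu.ne')
  have h2 : HasDerivAt (fun u : ℝ => (1 + u) ^ (-(2 * a)))
      (-(2 * a) * (1 + u) ^ (-(2 * a) - 1)) u := by
    simpa using ((hasDerivAt_id u).const_add 1).rpow_const (p := -(2 * a)) (Or.inl h1u.ne')
  refine (h1.mul h2).congr_deriv ?_
  rw [rpow_sub_one hu.ne', rpow_sub_one h1u.ne']
  field_simp
  ring

lemma continuousOn_rpow_mul_one_add_rpow (ha : 0 < a) :
    ContinuousOn (fun u : ℝ => u ^ a * (1 + u) ^ (-(2 * a))) (Ici 0) := by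
  intro u (hu : 0 ≤ u)
  exact ((continuousAt_rpow_const u a (Or.inr ha.le)).mul
    ((continuous_const.add continuous_id).continuousAt.rpow_const
      (Or.inl (by dsimp; linarith)))).continuousWithinAt

lemma tendsto_rpow_mul_one_add_rpow_atTop (ha : 0 < a) :
    Tendsto (fun u : ℝ => u ^ a * (1 + u) ^ (-(2 * a))) atTop (𝓝 0) := by
  refine squeeze_zero' (eventually_atTop.2 ⟨0, fun u (hu : 0 ≤ u) =>
    mul_nonneg (rpow_nonneg hu a) (rpow_nonneg (by linarith) _)⟩)
    (eventually_atTop.2 ⟨1, fun u hu => ?_⟩) (tendsto_rpow_neg_atTop ha)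
  have hu0 : 0 < u := by linarith
  calc u ^ a * (1 + u) ^ (-(2 * a)) ≤ u ^ a * u ^ (-(2 * a)) :=
        mul_le_mul_of_nonneg_left (rpow_le_rpow_of_nonpos hu0 (by linarith) (by linarith))
          (by positivity)
    _ = u ^ (-a) := by rw [← rpow_add hu0]; ring_nf

theorem integral_Ioi_rpow_mul_abs_one_sub_div (ha : 0 < a) :
    ∫ u in Ioi 0, u ^ (a - 1) * (1 + u) ^ (-(2 * a)) * (|1 - u| / (1 + u))
      = 2 * 2 ^ (-(2 * a)) / a := by
  set f := fun u : ℝ => u ^ (a - 1) * (1 + u) ^ (-(2 * a)) * (|1 - u| / (1 + u))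
  set G := fun u : ℝ => u ^ a * (1 + u) ^ (-(2 * a))
  have hf_nonneg : ∀ u ∈ Ioi (0 : ℝ), 0 ≤ f u := fun u (hu : 0 < u) => by
    have : 0 < 1 + u := by linarith
    positivity
  have hG_cont : ContinuousOn G (Ici 0) := continuousOn_rpow_mul_one_add_rpow ha
  have hderiv_left : ∀ u ∈ Ioo (0 : ℝ) 1, HasDerivAt (fun u => G u / a) (f u) u := by
    intro u ⟨hu0, hu1⟩
    refine ((hasDerivAt_rpow_mul_one_add_rpow hu0).div_const a).congr_deriv ?_
    simp only [f, abs_of_pos (sub_pos.2 hu1)]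
    field_simp
  have hderiv_right : ∀ u ∈ Ioi (1 : ℝ), HasDerivAt (fun u => -G u / a) (f u) u := by
    intro u (hu1 : 1 < u)
    refine ((hasDerivAt_rpow_mul_one_add_rpow (zero_lt_one.trans hu1)).neg.div_const a
      ).congr_deriv ?_
    simp only [f, abs_of_neg (sub_neg.2 hu1)]
    field_simp
  have hcont_left : ContinuousOn (fun u => G u / a) (Icc 0 1) :=
    (hG_cont.mono Icc_subset_Ici_self).div_const a
  have hcont_right : ContinuousWithinAt (fun u => -G u / a) (Ici 1) 1 :=
    ((hG_cont.mono (Ici_subset_Ici.2 zero_le_one)) 1 self_mem_Ici).neg.div_const a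
  have hlim : Tendsto (fun u => -G u / a) atTop (𝓝 0) := by
    simpa using ((tendsto_rpow_mul_one_add_rpow_atTop ha).neg).div_const a
  have hint_left : IntegrableOn f (Ioc 0 1) :=
    intervalIntegral.integrableOn_deriv_of_nonneg hcont_left hderiv_left
      fun u hu => hf_nonneg u hu.1
  have hint_right : IntegrableOn f (Ioi 1) :=
    integrableOn_Ioi_deriv_of_nonneg hcont_right hderiv_right
      (fun u (hu : 1 < u) => hf_nonneg u (zero_lt_one.trans hu)) hlim
  rw [← Ioc_union_Ioi_eq_Ioi zero_le_one, setIntegral_union (Ioc_disjoint_Ioi le_rfl)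
      measurableSet_Ioi hint_left hint_right, ← intervalIntegral.integral_of_le zero_le_one,
    intervalIntegral.integral_eq_sub_of_hasDerivAt_of_le zero_le_one hcont_left hderiv_left
      ((intervalIntegrable_iff_integrableOn_Ioc_of_le zero_le_one).2 hint_left),
    integral_Ioi_of_hasDerivAt_of_nonneg hcont_right hderiv_right
      (fun u (hu : 1 < u) => hf_nonneg u (zero_lt_one.trans hu)) hlim]
  simp only [G, zero_rpow ha.ne', one_rpow]
  norm_num
  ring

end

namespace ProbabilityTheory

@[fun_prop]
lemma measurable_gammaPDF (a r : ℝ) : Measurable (gammaPDF a r) :=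
  (measurable_gammaPDFReal a r).ennreal_ofReal

lemma gammaMeasure_ae_pos (a r : ℝ) : ∀ᵐ x ∂gammaMeasure a r, 0 < x := by
  rw [gammaMeasure, ae_withDensity_iff (measurable_gammaPDF a r)]
  filter_upwards [(countable_singleton (0 : ℝ)).ae_notMem volume] with x hx0 hpdf
  exact lt_of_le_of_ne (not_lt.1 fun hx => hpdf (gammaPDF_of_neg hx)) (Ne.symm hx0)

lemma lintegral_gammaMeasure (a r : ℝ) {f : ℝ → ℝ≥0∞} (hf : Measurable f) :
    ∫⁻ x, f x ∂gammaMeasure a r = ∫⁻ x in Ioi 0, gammaPDF a r x * f x := by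
  rw [gammaMeasure, lintegral_withDensity_eq_lintegral_mul _ (measurable_gammaPDF a r) hf]
  exact lintegral_eq_setLIntegral_Ioi_zero fun x hx => by simp [gammaPDF_of_neg hx]

lemma setLIntegral_Ioi_zero_gammaPDF {a r : ℝ} (ha : 0 < a) (hr : 0 < r) :
    ∫⁻ x in Ioi 0, gammaPDF a r x = 1 := by
  rw [← lintegral_eq_setLIntegral_Ioi_zero fun x hx => gammaPDF_of_neg hx,
    lintegral_gammaPDF_eq_one ha hr]

noncomputable def betaPrimePDFReal (a b u : ℝ) : ℝ :=
  u ^ (a - 1) * (1 + u) ^ (-(a + b)) / betaFun a b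

@[fun_prop]
lemma measurable_betaPrimePDFReal (a b : ℝ) : Measurable (betaPrimePDFReal a b) := by
  unfold betaPrimePDFReal
  fun_prop

section

variable {a b r : ℝ}

lemma betaPrimePDFReal_nonneg (ha : 0 < a) (hb : 0 < b) {u : ℝ} (hu : 0 ≤ u) :
    0 ≤ betaPrimePDFReal a b u := by
  have : 0 < betaFun a b := by unfold betaFun; positivity
  unfold betaPrimePDFReal
  positivity

lemma mul_gammaPDFReal_mul_gammaPDFReal (ha : 0 < a) (hb : 0 < b) (hr : 0 < r) {x u : ℝ}
    (hx : 0 < x) (hu : 0 < u) :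
    x * gammaPDFReal b r x * gammaPDFReal a r (x * u)
      = betaPrimePDFReal a b u * gammaPDFReal (a + b) (r * (1 + u)) x := by
  have h1u : 0 < 1 + u := by linarith
  have hΓa := (Gamma_pos_of_pos ha).ne'
  have hΓb := (Gamma_pos_of_pos hb).ne'
  have hΓab := (Gamma_pos_of_pos (add_pos ha hb)).ne'
  simp only [gammaPDFReal, betaPrimePDFReal, betaFun, if_pos hx.le, if_pos (mul_pos hx hu).le]
  have e1 : (x * u) ^ (a - 1) = x ^ (a - 1) * u ^ (a - 1) := mul_rpow hx.le hu.le
  have e2 : x ^ (a + b - 1) = x * x ^ (b - 1) * x ^ (a - 1) := by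
    rw [← rpow_one_add' hx.le (by linarith), ← rpow_add hx]; ring_nf
  have e3 : (r * (1 + u)) ^ (a + b) = r ^ b * r ^ a * (1 + u) ^ (a + b) := by
    rw [mul_rpow hr.le h1u.le, rpow_add hr]; ring
  have e4 : exp (-(r * (1 + u) * x)) = exp (-(r * x)) * exp (-(r * (x * u))) := by
    rw [← exp_add]; ring_nf
  rw [e1, e2, e3, e4, rpow_neg h1u.le]
  field_simp

lemma setLIntegral_mul_gammaPDF_mul_gammaPDF (ha : 0 < a) (hb : 0 < b) (hr : 0 < r) {u : ℝ}
    (hu : 0 < u) :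
    ∫⁻ x in Ioi 0, ENNReal.ofReal x * gammaPDF b r x * gammaPDF a r (x * u)
      = ENNReal.ofReal (betaPrimePDFReal a b u) := by
  have h_pdf : ∀ x ∈ Ioi (0 : ℝ), ENNReal.ofReal x * gammaPDF b r x * gammaPDF a r (x * u)
      = ENNReal.ofReal (betaPrimePDFReal a b u) * gammaPDF (a + b) (r * (1 + u)) x := by
    intro x (hx : 0 < x)
    simp only [gammaPDF]
    rw [← ENNReal.ofReal_mul hx.le,
      ← ENNReal.ofReal_mul (mul_nonneg hx.le (gammaPDFReal_nonneg hb hr x)),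
      mul_gammaPDFReal_mul_gammaPDFReal ha hb hr hx hu,
      ENNReal.ofReal_mul (betaPrimePDFReal_nonneg ha hb hu.le)]
  rw [setLIntegral_congr_fun measurableSet_Ioi h_pdf, lintegral_const_mul _ (by fun_prop),
    setLIntegral_Ioi_zero_gammaPDF (add_pos ha hb) (by positivity), mul_one]

theorem lintegral_comp_div_gammaMeasure_prod (ha : 0 < a) (hb : 0 < b) (hr : 0 < r)
    {h : ℝ → ℝ≥0∞} (hh : Measurable h) :
    ∫⁻ p, h (p.2 / p.1) ∂(gammaMeasure b r).prod (gammaMeasure a r)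
      = ∫⁻ u in Ioi 0, ENNReal.ofReal (betaPrimePDFReal a b u) * h u := by
  have := isProbabilityMeasure_gammaMeasure ha hr
  calc ∫⁻ p, h (p.2 / p.1) ∂(gammaMeasure b r).prod (gammaMeasure a r)
      = ∫⁻ x in Ioi 0, gammaPDF b r x * ∫⁻ y in Ioi 0, gammaPDF a r y * h (y / x) := by
        rw [lintegral_prod _ (by fun_prop), lintegral_gammaMeasure b r (by fun_prop)]
        refine setLIntegral_congr_fun measurableSet_Ioi fun x _ => ?_
        rw [lintegral_gammaMeasure a r (by fun_prop)]
    _ = ∫⁻ x in Ioi 0, ∫⁻ u in Ioi 0,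
          ENNReal.ofReal x * gammaPDF b r x * gammaPDF a r (x * u) * h u := by
        refine setLIntegral_congr_fun measurableSet_Ioi fun x (hx : 0 < x) => ?_
        rw [setLIntegral_Ioi_zero_comp_mul_left hx, ← mul_assoc, mul_comm _ (ENNReal.ofReal x),
          ← lintegral_const_mul'' _ (by fun_prop)]
        simp only [mul_div_cancel_left₀ _ hx.ne', mul_assoc]
    _ = ∫⁻ u in Ioi 0,
          (∫⁻ x in Ioi 0, ENNReal.ofReal x * gammaPDF b r x * gammaPDF a r (x * u)) * h u := by
        rw [lintegral_lintegral_swap (by fun_prop)]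
        refine setLIntegral_congr_fun measurableSet_Ioi fun u _ => ?_
        rw [lintegral_mul_const _ (by fun_prop)]
    _ = ∫⁻ u in Ioi 0, ENNReal.ofReal (betaPrimePDFReal a b u) * h u := by
        refine setLIntegral_congr_fun measurableSet_Ioi fun u (hu : 0 < u) => ?_
        rw [setLIntegral_mul_gammaPDF_mul_gammaPDF ha hb hr hu]

theorem integral_comp_div_gammaMeasure_prod (ha : 0 < a) (hb : 0 < b) (hr : 0 < r)
    {h : ℝ → ℝ} (hh : Measurable h) (h_nonneg : ∀ u ≥ 0, 0 ≤ h u) :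
    ∫ p, h (p.2 / p.1) ∂(gammaMeasure b r).prod (gammaMeasure a r)
      = ∫ u in Ioi 0, betaPrimePDFReal a b u * h u := by
  have h_ratio_nonneg :
      ∀ᵐ p ∂(gammaMeasure b r).prod (gammaMeasure a r), 0 ≤ h (p.2 / p.1) := by
    filter_upwards [Measure.quasiMeasurePreserving_fst.ae (gammaMeasure_ae_pos b r),
      Measure.quasiMeasurePreserving_snd.ae (gammaMeasure_ae_pos a r)] with p h1 h2
    exact h_nonneg _ (div_pos h2 h1).le
  have h_density_nonneg : 0 ≤ᵐ[volume.restrict (Ioi 0)] fun u => betaPrimePDFReal a b u * h u :=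
    (ae_restrict_iff' measurableSet_Ioi).2 <| ae_of_all _ fun u (hu : 0 < u) =>
      mul_nonneg (betaPrimePDFReal_nonneg ha hb hu.le) (h_nonneg u hu.le)
  rw [integral_eq_lintegral_of_nonneg_ae h_ratio_nonneg
      (hh.comp (measurable_snd.div measurable_fst)).aestronglyMeasurable,
    integral_eq_lintegral_of_nonneg_ae h_density_nonneg
      ((measurable_betaPrimePDFReal a b).mul hh).aestronglyMeasurable,
    lintegral_comp_div_gammaMeasure_prod ha hb hr hh.ennreal_ofReal]
  congr 1
  refine setLIntegral_congr_fun measurableSet_Ioi fun u (hu : 0 < u) => ?_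
  rw [ENNReal.ofReal_mul (betaPrimePDFReal_nonneg ha hb hu.le)]

theorem integral_betaPrimePDFReal_mul_abs_one_sub_div (ha : 0 < a) :
    ∫ u in Ioi 0, betaPrimePDFReal a a u * (|1 - u| / (1 + u))
      = (2 ^ (2 * a - 1) * a * betaFun a a)⁻¹ := by
  simp only [betaPrimePDFReal, ← two_mul, div_mul_eq_mul_div, integral_div]
  rw [integral_Ioi_rpow_mul_abs_one_sub_div ha, rpow_sub two_pos, rpow_neg zero_le_two, rpow_one]
  field_simp

end

end ProbabilityTheory

/-- For i.i.d. Gamma(α, β) random variables,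
`E[|X₁−X₂|/(X₁+X₂)] = (2^{2α−1} · α · B(α,α))⁻¹`. -/
theorem first_abs_moment_gamma {Ω : Type*} [MeasurableSpace Ω] (P : Measure Ω)
    [IsProbabilityMeasure P] (X₁ X₂ : Ω → ℝ) (hX₁ : Measurable X₁) (hX₂ : Measurable X₂)
    (hindep : IndepFun X₁ X₂ P) (α β : ℝ) (hα : 0 < α) (hβ : 0 < β)
    (hlaw₁ : Measure.map X₁ P = gammaMeasure α β)
    (hlaw₂ : Measure.map X₂ P = gammaMeasure α β) :
    ∫ ω, |X₁ ω - X₂ ω| / (X₁ ω + X₂ ω) ∂P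
      = (2 ^ (2 * α - 1) * α * betaFun α α)⁻¹ := by
  have hX₁_pos : ∀ᵐ ω ∂P, 0 < X₁ ω :=
    ae_of_ae_map hX₁.aemeasurable (hlaw₁ ▸ gammaMeasure_ae_pos α β)
  have hlaw : P.map (fun ω => (X₁ ω, X₂ ω)) = (gammaMeasure α β).prod (gammaMeasure α β) := by
    rw [(indepFun_iff_map_prod_eq_prod_map_map hX₁.aemeasurable hX₂.aemeasurable).1 hindep,
      hlaw₁, hlaw₂]
  have h_homogeneous : ∀ x y : ℝ, 0 < x → |x - y| / (x + y) = |1 - y / x| / (1 + y / x) := by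
    intro x y hx
    rw [← mul_div_mul_left _ (1 + y / x) hx.ne', ← abs_of_pos hx, ← abs_mul, abs_of_pos hx,
      mul_sub, mul_add, mul_one, mul_div_cancel₀ _ hx.ne']
  have hk : Measurable fun u : ℝ => |1 - u| / (1 + u) := by fun_prop
  calc ∫ ω, |X₁ ω - X₂ ω| / (X₁ ω + X₂ ω) ∂P
      = ∫ ω, |1 - X₂ ω / X₁ ω| / (1 + X₂ ω / X₁ ω) ∂P :=
        integral_congr_ae <| hX₁_pos.mono fun ω hω => h_homogeneous _ _ hω
    _ = ∫ p, |1 - p.2 / p.1| / (1 + p.2 / p.1) ∂(gammaMeasure α β).prod (gammaMeasure α β) := by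
        rw [← hlaw]
        exact (integral_map (hX₁.prodMk hX₂).aemeasurable
          (hk.comp (measurable_snd.div measurable_fst)).aestronglyMeasurable).symm
    _ = ∫ u in Ioi 0, betaPrimePDFReal α α u * (|1 - u| / (1 + u)) :=
        integral_comp_div_gammaMeasure_prod hα hα hβ hk fun u hu =>
          div_nonneg (abs_nonneg _) (by linarith)
    _ = (2 ^ (2 * α - 1) * α * betaFun α α)⁻¹ := integral_betaPrimePDFReal_mul_abs_one_sub_div hα
end

section
/- If X1, X2 are i.i.d. with a log-concave density f (i.e., f = e^φ with φ concave, twice differentiable) on (0,∞), then E[|X1−X2|/(X1+X2) | X1+X2 > d] ≤ 1/2 for all d>0 with P(X1+X2>d)>0. -/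
open MeasureTheory ProbabilityTheory Real Set
open scoped ENNReal

/-!
Write `ρ(x, y) = f x * f y` for the density of `(X₁, X₂)` and `F = |x - y| / (x + y)`. By the
symmetry `(x, y) ↦ (y, x)` it suffices to integrate over the wedge `0 < y < x`. There the map
`L (x, y) = ((x + 3y)/2, (x - y)/2)`, the reflection in the line `x = 3y` (where `F = 1/2`) along
`(1, -1)`, preserves Lebesgue measure, the sum `x + y` and the wedge, and `F ∘ L = 1 - F`. Hence
`2 F ρ + 2 (F ρ) ∘ L - ρ - ρ ∘ L = (2F - 1)(ρ - ρ ∘ L) ≤ 0`: of the two points `p`, `L p`, which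
have the same coordinate sum, log-concavity makes `ρ` larger at the more balanced one, and that
is the one where `F ≤ 1/2`. Averaging over `p` and `L p` gives `∫ F ρ ≤ ½ ∫ ρ` on every set
invariant under `L` and the swap, such as `{x + y > d}`.
-/

theorem ConcaveOn.add_le_add_of_mem_Icc {s : Set ℝ} {φ : ℝ → ℝ} (hφ : ConcaveOn ℝ s φ)
    {x y a : ℝ} (hx : x ∈ s) (hy : y ∈ s) (ha : a ∈ Icc y x) :
    φ x + φ y ≤ φ a + φ (x + y - a) := by
  obtain ⟨hya, hax⟩ := ha
  rcases hax.eq_or_lt with rfl | hax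
  · rw [add_sub_cancel_left]
  have hxy : 0 < x - y := by linarith
  set t := (a - y) / (x - y)
  have ht₀ : 0 ≤ t := div_nonneg (by linarith) hxy.le
  have ht₁ : t ≤ 1 := by rw [div_le_one hxy]; linarith
  have h₁ := hφ.2 hx hy ht₀ (sub_nonneg.2 ht₁) (add_sub_cancel t 1)
  have h₂ := hφ.2 hx hy (sub_nonneg.2 ht₁) ht₀ (sub_add_cancel 1 t)
  have ha : t • x + (1 - t) • y = a := by simp only [smul_eq_mul, t]; field_simp; ring
  have hb : (1 - t) • x + t • y = x + y - a := by simp only [smul_eq_mul, t]; field_simp; ring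
  rw [ha] at h₁
  rw [hb] at h₂
  simp only [smul_eq_mul] at h₁ h₂
  linarith

noncomputable def expOnIoi (φ : ℝ → ℝ) (x : ℝ) : ℝ := if 0 < x then exp (φ x) else 0

theorem expOnIoi_nonneg (φ : ℝ → ℝ) (x : ℝ) : 0 ≤ expOnIoi φ x := by
  unfold expOnIoi; split_ifs <;> positivity

theorem expOnIoi_of_nonpos (φ : ℝ → ℝ) {x : ℝ} (hx : x ≤ 0) : expOnIoi φ x = 0 :=
  if_neg hx.not_gt

theorem measurable_expOnIoi {φ : ℝ → ℝ} (hφ : ContinuousOn φ (Ioi 0)) :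
    Measurable (expOnIoi φ) := by
  have : expOnIoi φ = (Ioi 0).piecewise (fun x => exp (φ x)) 0 := by
    ext x; simp [expOnIoi, piecewise]
  rw [this]
  exact hφ.rexp.measurable_piecewise continuousOn_const measurableSet_Ioi

theorem expOnIoi_mul_le {φ : ℝ → ℝ} (hφ : ConcaveOn ℝ (Ioi 0) φ) ⦃x y a : ℝ⦄ (hy : 0 < y)
    (ha : a ∈ Icc y x) :
    expOnIoi φ x * expOnIoi φ y ≤ expOnIoi φ a * expOnIoi φ (x + y - a) := by
  have hx : 0 < x := hy.trans_le (ha.1.trans ha.2)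
  have hb : 0 < x + y - a := by linarith [ha.2]
  simp only [expOnIoi, if_pos hx, if_pos hy, if_pos (hy.trans_le ha.1), if_pos hb, ← exp_add]
  exact exp_le_exp.2 (hφ.add_le_add_of_mem_Icc hx hy ha)

theorem MeasureTheory.MeasurePreserving.setLIntegral_ofReal_le_of_add_comp_le {α : Type*}
    [MeasurableSpace α] {μ : Measure α} {T : α → α} (hT : MeasurePreserving T μ μ) {s : Set α}
    (hs : MeasurableSet s) (hTs : T ⁻¹' s = s) {f g : α → ℝ} (hf : Measurable f)
    (hg : Measurable g) (hf0 : ∀ x, 0 ≤ f x) (hfg : ∀ x ∈ s, f x + f (T x) ≤ g x + g (T x)) :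
    ∫⁻ x in s, ENNReal.ofReal (f x) ∂μ ≤ ∫⁻ x in s, ENNReal.ofReal (g x) ∂μ := by
  have comp_eq (h : α → ℝ) (hh : Measurable h) :
      ∫⁻ x in s, ENNReal.ofReal (h (T x)) ∂μ = ∫⁻ x in s, ENNReal.ofReal (h x) ∂μ := by
    simpa only [hTs] using hT.setLIntegral_comp_preimage hs hh.ennreal_ofReal
  have hsum : (∫⁻ x in s, ENNReal.ofReal (f x) ∂μ) + ∫⁻ x in s, ENNReal.ofReal (f x) ∂μ
      ≤ (∫⁻ x in s, ENNReal.ofReal (g x) ∂μ) + ∫⁻ x in s, ENNReal.ofReal (g x) ∂μ := calc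
    _ = ∫⁻ x in s, ENNReal.ofReal (f x) + ENNReal.ofReal (f (T x)) ∂μ := by
      rw [lintegral_add_left hf.ennreal_ofReal, comp_eq f hf]
    _ ≤ ∫⁻ x in s, ENNReal.ofReal (g x) + ENNReal.ofReal (g (T x)) ∂μ :=
      setLIntegral_mono' hs fun x hx => by
        rw [← ENNReal.ofReal_add (hf0 x) (hf0 (T x))]
        exact (ENNReal.ofReal_le_ofReal (hfg x hx)).trans ENNReal.ofReal_add_le
    _ = _ := by rw [lintegral_add_left hg.ennreal_ofReal, comp_eq g hg]
  by_contra! h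
  exact (ENNReal.add_lt_add h h).not_ge hsum

noncomputable def sumReflect : ℝ × ℝ →ₗ[ℝ] ℝ × ℝ where
  toFun p := ((p.1 + 3 * p.2) / 2, (p.1 - p.2) / 2)
  map_add' p q := by ext <;> simp <;> ring
  map_smul' c p := by ext <;> simp <;> ring

@[simp]
theorem sumReflect_apply (p : ℝ × ℝ) :
    sumReflect p = ((p.1 + 3 * p.2) / 2, (p.1 - p.2) / 2) := rfl

theorem measurePreserving_sumReflect : MeasurePreserving sumReflect volume volume := by
  have hdet : LinearMap.det sumReflect = -1 := by
    rw [← LinearMap.det_toMatrix (Module.Basis.finTwoProd ℝ), Matrix.det_fin_two]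
    simp [LinearMap.toMatrix_apply]
    norm_num
  refine ⟨sumReflect.continuous_of_finiteDimensional.measurable, ?_⟩
  rw [Measure.map_linearMap_addHaar_eq_smul_addHaar _ (by simp [hdet]), hdet]
  norm_num

def wedge : Set (ℝ × ℝ) := {p | 0 < p.2 ∧ p.2 < p.1}

theorem measurableSet_wedge : MeasurableSet wedge :=
  (measurableSet_lt measurable_const measurable_snd).inter
    (measurableSet_lt measurable_snd measurable_fst)

theorem sumReflect_mem_wedge {p : ℝ × ℝ} : sumReflect p ∈ wedge ↔ p ∈ wedge := by
  simp only [wedge, mem_ofPred_eq, sumReflect_apply]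
  constructor <;> rintro ⟨h₁, h₂⟩ <;> constructor <;> linarith

theorem swap_notMem_wedge {p : ℝ × ℝ} (hp : p ∈ wedge) : p.swap ∉ wedge :=
  fun h => h.2.not_gt hp.2

noncomputable def relDiff (p : ℝ × ℝ) : ℝ := |p.1 - p.2| / (p.1 + p.2)

theorem measurable_relDiff : Measurable relDiff := by
  unfold relDiff; fun_prop

theorem relDiff_swap (p : ℝ × ℝ) : relDiff p.swap = relDiff p := by
  rw [relDiff, relDiff, Prod.fst_swap, Prod.snd_swap, abs_sub_comm, add_comm]

theorem relDiff_nonneg {p : ℝ × ℝ} (h₁ : 0 < p.1) (h₂ : 0 < p.2) : 0 ≤ relDiff p := by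
  unfold relDiff; positivity

theorem two_mul_relDiff_sub_one {p : ℝ × ℝ} (hp : p ∈ wedge) :
    2 * relDiff p - 1 = (p.1 - 3 * p.2) / (p.1 + p.2) := by
  obtain ⟨h₂, h₁⟩ := hp
  have hs : 0 < p.1 + p.2 := by linarith
  rw [relDiff, abs_of_pos (by linarith)]
  field_simp
  ring

theorem relDiff_sumReflect {p : ℝ × ℝ} (hp : p ∈ wedge) :
    relDiff (sumReflect p) = 1 - relDiff p := by
  obtain ⟨h₂, h₁⟩ := hp
  have hs : 0 < p.1 + p.2 := by linarith
  rw [relDiff, relDiff, sumReflect_apply,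
    show (p.1 + 3 * p.2) / 2 - (p.1 - p.2) / 2 = 2 * p.2 by ring,
    show (p.1 + 3 * p.2) / 2 + (p.1 - p.2) / 2 = p.1 + p.2 by ring,
    abs_of_pos (by linarith), abs_of_pos (by linarith)]
  field_simp
  ring

theorem relDiff_mul_add_sumReflect_le {f : ℝ → ℝ}
    (hf : ∀ ⦃x y a⦄, 0 < y → a ∈ Icc y x → f x * f y ≤ f a * f (x + y - a))
    {p : ℝ × ℝ} (hp : p ∈ wedge) :
    2 * (f p.1 * f p.2 * relDiff p)
        + 2 * (f (sumReflect p).1 * f (sumReflect p).2 * relDiff (sumReflect p))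
      ≤ f p.1 * f p.2 + f (sumReflect p).1 * f (sumReflect p).2 := by
  obtain ⟨x, y⟩ := p
  obtain ⟨hy, hyx⟩ : 0 < y ∧ y < x := hp
  have key :
      (2 * relDiff (x, y) - 1) * (f x * f y - f ((x + 3 * y) / 2) * f ((x - y) / 2)) ≤ 0 := by
    rw [two_mul_relDiff_sub_one ⟨hy, hyx⟩]
    rcases le_or_gt (3 * y) x with h | h
    · refine mul_nonpos_of_nonneg_of_nonpos (div_nonneg (by linarith) (by linarith)) ?_
      have := hf (x := x) (a := (x + 3 * y) / 2) hy ⟨by linarith, by linarith⟩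
      rw [show x + y - (x + 3 * y) / 2 = (x - y) / 2 by ring] at this
      linarith
    · refine mul_nonpos_of_nonpos_of_nonneg (div_nonpos_of_nonpos_of_nonneg (by linarith)
        (by linarith)) ?_
      have := hf (x := (x + 3 * y) / 2) (y := (x - y) / 2) (a := x) (by linarith)
        ⟨by linarith, by linarith⟩
      rw [show (x + 3 * y) / 2 + (x - y) / 2 - x = y by ring] at this
      linarith
  rw [relDiff_sumReflect ⟨hy, hyx⟩]
  simp only [sumReflect_apply]
  linear_combination key

theorem pos_of_apply_mul_apply_ne_zero {f : ℝ → ℝ} (hf_supp : ∀ x ≤ 0, f x = 0) {p : ℝ × ℝ}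
    (hp : f p.1 * f p.2 ≠ 0) : 0 < p.1 ∧ 0 < p.2 := by
  obtain ⟨h₁, h₂⟩ := mul_ne_zero_iff.1 hp
  exact ⟨lt_of_not_ge fun h => h₁ (hf_supp _ h), lt_of_not_ge fun h => h₂ (hf_supp _ h)⟩

theorem two_mul_setLIntegral_relDiff_le {f : ℝ → ℝ} (hfm : Measurable f) (hf0 : ∀ x, 0 ≤ f x)
    (hf_supp : ∀ x ≤ 0, f x = 0)
    (hf : ∀ ⦃x y a⦄, 0 < y → a ∈ Icc y x → f x * f y ≤ f a * f (x + y - a))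
    {A : Set (ℝ × ℝ)} (hA : MeasurableSet A) (hA_swap : Prod.swap ⁻¹' A = A)
    (hA_reflect : sumReflect ⁻¹' A = A) :
    2 * ∫⁻ p in A, ENNReal.ofReal (f p.1 * f p.2 * relDiff p)
      ≤ ∫⁻ p in A, ENNReal.ofReal (f p.1 * f p.2) := by
  set ρ : ℝ × ℝ → ℝ := fun p => f p.1 * f p.2
  have hρm : Measurable ρ := (hfm.comp measurable_fst).mul (hfm.comp measurable_snd)
  have hρ0 (p : ℝ × ℝ) : 0 ≤ ρ p := mul_nonneg (hf0 _) (hf0 _)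
  have hρ_swap (p : ℝ × ℝ) : ρ p.swap = ρ p := mul_comm _ _
  have hρ_pos {p : ℝ × ℝ} (hp : ρ p ≠ 0) : 0 < p.1 ∧ 0 < p.2 :=
    pos_of_apply_mul_apply_ne_zero hf_supp hp
  have hρF0 (p : ℝ × ℝ) : 0 ≤ ρ p * relDiff p := by
    by_cases hp : ρ p = 0
    · simp [hp]
    · exact mul_nonneg (hρ0 p) (relDiff_nonneg (hρ_pos hp).1 (hρ_pos hp).2)
  have hρFm : Measurable fun p => ρ p * relDiff p := hρm.mul measurable_relDiff
  have hswap : MeasurePreserving Prod.swap (volume : Measure (ℝ × ℝ)) volume :=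
    Measure.measurePreserving_swap
  -- Off the diagonal exactly one of `p`, `p.swap` lies in the wedge.
  have hsym : ∫⁻ p in A, ENNReal.ofReal (ρ p * relDiff p)
      ≤ ∫⁻ p in A, ENNReal.ofReal (wedge.indicator (fun p => 2 * (ρ p * relDiff p)) p) := by
    refine hswap.setLIntegral_ofReal_le_of_add_comp_le hA hA_swap hρFm
      ((hρFm.const_mul 2).indicator measurableSet_wedge) hρF0 fun p _ => ?_
    rw [hρ_swap, relDiff_swap]
    by_cases hp : p ∈ wedge
    · rw [indicator_of_mem hp, indicator_of_notMem (swap_notMem_wedge hp)]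
      linarith [hρF0 p]
    by_cases hp' : p.swap ∈ wedge
    · rw [indicator_of_mem hp', indicator_of_notMem hp, hρ_swap, relDiff_swap]
      linarith [hρF0 p]
    have hzero : ρ p * relDiff p = 0 := by
      by_cases hρp : ρ p = 0
      · simp [hρp]
      have hdiag : p.1 = p.2 := le_antisymm (not_lt.1 fun h => hp ⟨(hρ_pos hρp).2, h⟩)
        (not_lt.1 fun h => hp' ⟨(hρ_pos hρp).1, h⟩)
      simp [relDiff, hdiag]
    simp [indicator_of_notMem hp, indicator_of_notMem hp', hzero]
  have hreflect : ∫⁻ p in A, ENNReal.ofReal (wedge.indicator (fun p => 2 * (ρ p * relDiff p)) p)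
      ≤ ∫⁻ p in A, ENNReal.ofReal (wedge.indicator ρ p) := by
    refine measurePreserving_sumReflect.setLIntegral_ofReal_le_of_add_comp_le hA hA_reflect
      ((hρFm.const_mul 2).indicator measurableSet_wedge) (hρm.indicator measurableSet_wedge)
      (fun p => indicator_nonneg (fun p _ => by linarith [hρF0 p]) p) fun p _ => ?_
    by_cases hp : p ∈ wedge
    · simp only [indicator_of_mem hp, indicator_of_mem (sumReflect_mem_wedge.2 hp)]
      exact relDiff_mul_add_sumReflect_le hf hp
    · simp only [indicator_of_notMem hp, indicator_of_notMem (mt sumReflect_mem_wedge.1 hp)]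
      rfl
  have hwedge : ∫⁻ p in A, ENNReal.ofReal (2 * wedge.indicator ρ p)
      ≤ ∫⁻ p in A, ENNReal.ofReal (ρ p) := by
    refine hswap.setLIntegral_ofReal_le_of_add_comp_le hA hA_swap
      ((hρm.indicator measurableSet_wedge).const_mul 2) hρm
      (fun p => mul_nonneg zero_le_two (indicator_nonneg (fun p _ => hρ0 p) p)) fun p _ => ?_
    rw [hρ_swap]
    by_cases hp : p ∈ wedge
    · rw [indicator_of_mem hp, indicator_of_notMem (swap_notMem_wedge hp)]
      linarith
    by_cases hp' : p.swap ∈ wedge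
    · rw [indicator_of_mem hp', indicator_of_notMem hp, hρ_swap]
      linarith
    rw [indicator_of_notMem hp, indicator_of_notMem hp']
    linarith [hρ0 p]
  calc 2 * ∫⁻ p in A, ENNReal.ofReal (ρ p * relDiff p)
      ≤ 2 * ∫⁻ p in A, ENNReal.ofReal (wedge.indicator ρ p) := by
        gcongr 2 * ?_
        exact hsym.trans hreflect
    _ = ∫⁻ p in A, ENNReal.ofReal (2 * wedge.indicator ρ p) := by
      rw [← lintegral_const_mul _ (hρm.indicator measurableSet_wedge).ennreal_ofReal]
      simp only [ENNReal.ofReal_mul zero_le_two, ENNReal.ofReal_ofNat]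
    _ ≤ _ := hwedge

theorem ProbabilityTheory.IndepFun.map_prodMk_eq_withDensity {Ω : Type*} [MeasurableSpace Ω]
    {P : Measure Ω} [IsFiniteMeasure P] {X₁ X₂ : Ω → ℝ} (hX₁ : AEMeasurable X₁ P)
    (hX₂ : AEMeasurable X₂ P) (hindep : IndepFun X₁ X₂ P) {g₁ g₂ : ℝ → ℝ≥0∞}
    (hg₁ : Measurable g₁) (hg₂ : Measurable g₂) (hlaw₁ : P.map X₁ = volume.withDensity g₁)
    (hlaw₂ : P.map X₂ = volume.withDensity g₂) :
    P.map (fun ω => (X₁ ω, X₂ ω)) = volume.withDensity fun p => g₁ p.1 * g₂ p.2 := by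
  rw [hindep.map_prod_eq_prod_map_map hX₁ hX₂, hlaw₁, hlaw₂, prod_withDensity hg₁ hg₂,
    Measure.volume_eq_prod]

theorem two_mul_setIntegral_relDiff_le {Ω : Type*} [MeasurableSpace Ω] {P : Measure Ω}
    [IsFiniteMeasure P] {X₁ X₂ : Ω → ℝ} (hX₁ : Measurable X₁) (hX₂ : Measurable X₂)
    (hindep : IndepFun X₁ X₂ P) {f : ℝ → ℝ} (hfm : Measurable f) (hf0 : ∀ x, 0 ≤ f x)
    (hf_supp : ∀ x ≤ 0, f x = 0)
    (hf : ∀ ⦃x y a⦄, 0 < y → a ∈ Icc y x → f x * f y ≤ f a * f (x + y - a))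
    (hlaw₁ : P.map X₁ = volume.withDensity fun x => ENNReal.ofReal (f x))
    (hlaw₂ : P.map X₂ = volume.withDensity fun x => ENNReal.ofReal (f x))
    {A : Set (ℝ × ℝ)} (hA : MeasurableSet A) (hA_swap : Prod.swap ⁻¹' A = A)
    (hA_reflect : sumReflect ⁻¹' A = A) :
    2 * ∫ ω in (fun ω => (X₁ ω, X₂ ω)) ⁻¹' A, relDiff (X₁ ω, X₂ ω) ∂P
      ≤ (P ((fun ω => (X₁ ω, X₂ ω)) ⁻¹' A)).toReal := by
  set ρ : ℝ × ℝ → ℝ≥0∞ := fun p => ENNReal.ofReal (f p.1 * f p.2)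
  have hρm : Measurable ρ :=
    ((hfm.comp measurable_fst).mul (hfm.comp measurable_snd)).ennreal_ofReal
  have hX : Measurable fun ω => (X₁ ω, X₂ ω) := hX₁.prodMk hX₂
  have hlaw : P.map (fun ω => (X₁ ω, X₂ ω)) = volume.withDensity ρ := by
    rw [hindep.map_prodMk_eq_withDensity hX₁.aemeasurable hX₂.aemeasurable hfm.ennreal_ofReal
      hfm.ennreal_ofReal hlaw₁ hlaw₂]
    simp only [ρ, ENNReal.ofReal_mul (hf0 _)]
  have hnonneg : 0 ≤ᵐ[(volume.withDensity ρ).restrict A] relDiff :=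
    ae_restrict_of_ae <| (ae_withDensity_iff hρm).2 <| ae_of_all _ fun p hp =>
      have hpos := pos_of_apply_mul_apply_ne_zero hf_supp
        (ne_of_gt (ENNReal.ofReal_pos.1 (pos_iff_ne_zero.2 hp)))
      relDiff_nonneg hpos.1 hpos.2
  have hfin : ∫⁻ p in A, ρ p ≠ ∞ := by
    rw [← withDensity_apply _ hA, ← hlaw]
    exact measure_ne_top _ _
  rw [← setIntegral_map hA measurable_relDiff.aestronglyMeasurable hX.aemeasurable,
    ← Measure.map_apply hX hA, hlaw, withDensity_apply _ hA,
    integral_eq_lintegral_of_nonneg_ae hnonneg measurable_relDiff.aestronglyMeasurable,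
    setLIntegral_withDensity_eq_setLIntegral_mul _ hρm measurable_relDiff.ennreal_ofReal hA,
    ← ENNReal.toReal_ofNat, ← ENNReal.toReal_mul]
  refine ENNReal.toReal_mono hfin ?_
  simp only [Pi.mul_apply, ρ, ← ENNReal.ofReal_mul (mul_nonneg (hf0 _) (hf0 _))]
  exact two_mul_setLIntegral_relDiff_le hfm hf0 hf_supp hf hA hA_swap hA_reflect

theorem g_le_half_of_logConcave_general {Ω : Type*} [MeasurableSpace Ω] (P : Measure Ω)
    [IsProbabilityMeasure P] (X₁ X₂ : Ω → ℝ) (hX₁ : Measurable X₁) (hX₂ : Measurable X₂)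
    (hindep : IndepFun X₁ X₂ P) (φ : ℝ → ℝ)
    (hconc : ConcaveOn ℝ (Set.Ioi (0:ℝ)) φ)
    (hlaw₁ : Measure.map X₁ P
      = volume.withDensity (fun x => ENNReal.ofReal (if 0 < x then Real.exp (φ x) else 0)))
    (hlaw₂ : Measure.map X₂ P
      = volume.withDensity (fun x => ENNReal.ofReal (if 0 < x then Real.exp (φ x) else 0)))
    (d : ℝ) :
    (∫ ω in {ω | X₁ ω + X₂ ω > d}, |X₁ ω - X₂ ω| / (X₁ ω + X₂ ω) ∂P)
      / (P {ω | X₁ ω + X₂ ω > d}).toReal ≤ 1 / 2 := by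
  have hA : MeasurableSet {p : ℝ × ℝ | d < p.1 + p.2} :=
    measurableSet_lt measurable_const (by fun_prop)
  have key : 2 * (∫ ω in {ω | X₁ ω + X₂ ω > d}, |X₁ ω - X₂ ω| / (X₁ ω + X₂ ω) ∂P)
      ≤ (P {ω | X₁ ω + X₂ ω > d}).toReal :=
    two_mul_setIntegral_relDiff_le hX₁ hX₂ hindep
      (measurable_expOnIoi (hconc.continuousOn isOpen_Ioi)) (expOnIoi_nonneg φ)
      (fun _ => expOnIoi_of_nonpos φ) (expOnIoi_mul_le hconc) hlaw₁ hlaw₂ hA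
      (by ext; simp [add_comm])
      (by ext; simp only [mem_preimage, sumReflect_apply, mem_ofPred_eq]; ring_nf)
  exact div_le_of_le_mul₀ ENNReal.toReal_nonneg (by norm_num) (by linarith)

/-- For i.i.d. random variables with a log-concave, twice differentiable density on `(0,∞)`,
`E[|X₁−X₂|/(X₁+X₂) | X₁+X₂ > d] ≤ 1/2` for every `d > 0` with positive probability. -/
theorem g_le_half_of_logConcave {Ω : Type*} [MeasurableSpace Ω] (P : Measure Ω)
    [IsProbabilityMeasure P] (X₁ X₂ : Ω → ℝ) (hX₁ : Measurable X₁) (hX₂ : Measurable X₂)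
    (hindep : IndepFun X₁ X₂ P) (φ : ℝ → ℝ)
    (hconc : ConcaveOn ℝ (Set.Ioi (0:ℝ)) φ)
    (hdiff : ∀ x ∈ Set.Ioi (0:ℝ), ContDiffAt ℝ 2 φ x)
    (hlaw₁ : Measure.map X₁ P
      = volume.withDensity (fun x => ENNReal.ofReal (if 0 < x then Real.exp (φ x) else 0)))
    (hlaw₂ : Measure.map X₂ P
      = volume.withDensity (fun x => ENNReal.ofReal (if 0 < x then Real.exp (φ x) else 0)))
    (d : ℝ) (hd : 0 < d) (hP : 0 < P {ω | X₁ ω + X₂ ω > d}) :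
    (∫ ω in {ω | X₁ ω + X₂ ω > d}, |X₁ ω - X₂ ω| / (X₁ ω + X₂ ω) ∂P)
      / (P {ω | X₁ ω + X₂ ω > d}).toReal ≤ 1 / 2 :=
  g_le_half_of_logConcave_general P X₁ X₂ hX₁ hX₂ hindep φ hconc hlaw₁ hlaw₂ d
end

section
/- If X1, X2 are i.i.d. with a log-convex density f on (0,∞), then E[|X1−X2|/(X1+X2) | X1+X2 > d] ≥ 1/2 for all d>0 with P(X1+X2>d)>0. -/
/-!
The claim says that `|x - y| / (x + y) - 1 / 2` has nonnegative integral against the density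
`f x * f y` over `x + y > d`. In the coordinates `(x, s) = (x, x + y)` this is an integral over
`s > d` of slice integrals `∫ x in (0, s), exp (φ x + φ (s - x)) * (|2x - s| / s - 1 / 2)`, and
each slice is nonnegative. Convexity of `φ` makes `φ x + φ (s - x)` a nondecreasing function of
`|2x - s|`, while the weight `|2x - s| / s - 1 / 2` is increasing in `|2x - s|`, changes sign at
`|2x - s| = s / 2` and has integral zero over `(0, s)`. Subtracting the value of the density at
the sign change therefore leaves a pointwise nonnegative integrand.
-/

open MeasureTheory ProbabilityTheory Real Set

theorem ConvexOn.add_comp_sub_le_of_mem_segment {E : Type*} [AddCommGroup E] [Module ℝ E]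
    {S : Set E} {φ : E → ℝ} (hφ : ConvexOn ℝ S φ) {a b s : E} (hb : b ∈ S)
    (hsb : s - b ∈ S) (ha : a ∈ segment ℝ b (s - b)) :
    φ a + φ (s - a) ≤ φ b + φ (s - b) := by
  obtain ⟨t, u, ht, hu, htu, rfl⟩ := ha
  have hreflect : s - (t • b + u • (s - b)) = u • b + t • (s - b) := by
    linear_combination (norm := module) -(htu • s)
  rw [hreflect]
  linear_combination hφ.2 hb hsb ht hu htu + hφ.2 hb hsb hu ht (by rw [add_comm, htu]) +
    (φ b + φ (s - b)) * htu

theorem integral_Ioo_abs_two_mul_sub_div_sub_half (s : ℝ) :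
    ∫ x in Ioo 0 s, (|2 * x - s| / s - 1 / 2) = 0 := by
  rcases le_or_gt s 0 with hs | hs
  · simp [Ioo_eq_empty_of_le hs]
  have hint : ∀ a b, IntervalIntegrable (fun x => |2 * x - s| / s - 1 / 2) volume a b :=
    fun _ _ => Continuous.intervalIntegrable (by fun_prop) _ _
  rw [integral_Ioc_eq_integral_Ioo.symm, ← intervalIntegral.integral_of_le hs.le,
    ← intervalIntegral.integral_add_adjacent_intervals (hint 0 (s / 2)) (hint (s / 2) s)]
  have hleft : ∫ x in (0)..(s / 2), (|2 * x - s| / s - 1 / 2)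
      = ∫ x in (0)..(s / 2), (1 / 2 - 2 / s * x) := by
    refine intervalIntegral.integral_congr fun x hx => ?_
    rw [uIcc_of_le (by linarith)] at hx
    rw [abs_of_nonpos (by linarith [hx.2])]
    field_simp
    ring
  have hright : ∫ x in (s / 2)..s, (|2 * x - s| / s - 1 / 2)
      = ∫ x in (s / 2)..s, (2 / s * x - 3 / 2) := by
    refine intervalIntegral.integral_congr fun x hx => ?_
    rw [uIcc_of_le (by linarith)] at hx
    rw [abs_of_nonneg (by linarith [hx.1])]
    field_simp
    ring
  rw [hleft, hright, intervalIntegral.integral_sub, intervalIntegral.integral_sub,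
    intervalIntegral.integral_const_mul, intervalIntegral.integral_const_mul, integral_id,
    integral_id, intervalIntegral.integral_const, intervalIntegral.integral_const, smul_eq_mul,
    smul_eq_mul]
  · field_simp
    ring
  all_goals exact Continuous.intervalIntegrable (by fun_prop) _ _

theorem setIntegral_mul_nonneg_of_integral_eq_zero {α : Type*} [MeasurableSpace α]
    {μ : Measure α} {I : Set α} {g w : α → ℝ} (c : ℝ) (hI : MeasurableSet I)
    (hw : IntegrableOn w I μ) (hw₀ : ∫ x in I, w x ∂μ = 0)
    (hsign : ∀ x ∈ I, 0 ≤ (g x - c) * w x) :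
    0 ≤ ∫ x in I, g x * w x ∂μ := by
  by_cases hgw : IntegrableOn (fun x => g x * w x) I μ
  · calc 0 ≤ ∫ x in I, (g x - c) * w x ∂μ := setIntegral_nonneg hI hsign
      _ = ∫ x in I, (g x * w x - c * w x) ∂μ := by congr 1 with x; ring
      _ = ∫ x in I, g x * w x ∂μ := by
        rw [integral_sub hgw (hw.const_mul c), integral_const_mul, hw₀, mul_zero, sub_zero]
  · exact (integral_undef hgw).ge

theorem ConvexOn.setIntegral_exp_add_comp_sub_mul_nonneg {φ : ℝ → ℝ}
    (hφ : ConvexOn ℝ (Ioi 0) φ) (s : ℝ) :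
    0 ≤ ∫ x in Ioo 0 s, exp (φ x + φ (s - x)) * (|2 * x - s| / s - 1 / 2) := by
  -- the weight changes sign at `x = s / 4` and at `x = 3 * s / 4`
  refine setIntegral_mul_nonneg_of_integral_eq_zero (exp (φ (3 * s / 4) + φ (s - 3 * s / 4)))
    measurableSet_Ioo ((Continuous.integrableOn_Icc (by fun_prop)).mono_set Ioo_subset_Icc_self)
    (integral_Ioo_abs_two_mul_sub_div_sub_half s) fun x ⟨hx0, hxs⟩ => ?_
  have hs : 0 < s := hx0.trans hxs
  rcases le_total |2 * x - s| (s / 2) with hle | hge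
  · have hmem : x ∈ segment ℝ (3 * s / 4) (s - 3 * s / 4) := by
      rw [segment_eq_uIcc, mem_uIcc]
      right; constructor <;> linarith [abs_le.mp hle]
    have hψ := hφ.add_comp_sub_le_of_mem_segment (mem_Ioi.2 (by linarith))
      (mem_Ioi.2 (by linarith)) hmem
    have hw : |2 * x - s| / s - 1 / 2 ≤ 0 := by rw [sub_nonpos, div_le_iff₀ hs]; linarith
    exact mul_nonneg_of_nonpos_of_nonpos (sub_nonpos.2 (exp_le_exp.2 hψ)) hw
  · have hmem : 3 * s / 4 ∈ segment ℝ x (s - x) := by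
      rw [segment_eq_uIcc, mem_uIcc]
      rcases le_abs'.mp hge with h | h
      · left; constructor <;> linarith
      · right; constructor <;> linarith
    have hψ := hφ.add_comp_sub_le_of_mem_segment (mem_Ioi.2 hx0) (mem_Ioi.2 (by linarith))
      hmem
    have hw : 0 ≤ |2 * x - s| / s - 1 / 2 := by rw [sub_nonneg, le_div_iff₀ hs]; linarith
    exact mul_nonneg (sub_nonneg.2 (exp_le_exp.2 hψ)) hw

theorem integral_eq_integral_integral_sub {E : Type*} [NormedAddCommGroup E] [NormedSpace ℝ E]
    {F : ℝ × ℝ → E} (hF : Integrable F) : ∫ p, F p = ∫ s, ∫ x, F (x, s - x) := by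
  have hshear := measurePreserving_prod_neg_add_swap (volume : Measure ℝ) (volume : Measure ℝ)
  rw [← Measure.volume_eq_prod] at hshear
  have hF' : AEStronglyMeasurable F (volume.map fun p : ℝ × ℝ => (p.2, -p.2 + p.1)) := by
    rw [hshear.map_eq]; exact hF.aestronglyMeasurable
  rw [← hshear.map_eq, integral_map hshear.aemeasurable hF', Measure.volume_eq_prod,
    integral_prod _ (by
      rw [← Measure.volume_eq_prod]; exact hshear.integrable_comp_of_integrable hF)]
  simp_rw [neg_add_eq_sub]

theorem integrable_of_isFiniteMeasure_withDensity {α : Type*} [MeasurableSpace α]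
    {μ : Measure α} {f : α → ℝ} (hf : AEStronglyMeasurable f μ) (hf₀ : 0 ≤ᵐ[μ] f)
    [IsFiniteMeasure (μ.withDensity fun x => ENNReal.ofReal (f x))] : Integrable f μ := by
  refine ⟨hf, (hasFiniteIntegral_iff_ofReal hf₀).2 ?_⟩
  simpa [withDensity_apply] using measure_lt_top (μ.withDensity fun x => ENNReal.ofReal (f x)) univ

noncomputable def expDensity (φ : ℝ → ℝ) (x : ℝ) : ℝ := if 0 < x then exp (φ x) else 0

noncomputable def expDensityMeasure (φ : ℝ → ℝ) : Measure ℝ :=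
  volume.withDensity fun x => ENNReal.ofReal (expDensity φ x)

theorem expDensity_nonneg (φ : ℝ → ℝ) (x : ℝ) : 0 ≤ expDensity φ x := by
  unfold expDensity; split_ifs <;> positivity

theorem measurable_expDensity {φ : ℝ → ℝ} (hφ : ContinuousOn φ (Ioi 0)) :
    Measurable (expDensity φ) := by
  convert (continuous_exp.comp_continuousOn hφ).measurable_piecewise continuousOn_const
    measurableSet_Ioi (g := fun _ => (0 : ℝ)) using 1
  ext x
  simp [expDensity, piecewise]

theorem expDensity_mul_expDensity_sub (φ : ℝ → ℝ) (s x : ℝ) :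
    expDensity φ x * expDensity φ (s - x)
      = (Ioo 0 s).indicator (fun x => exp (φ x + φ (s - x))) x := by
  unfold expDensity
  by_cases hx : x ∈ Ioo 0 s
  · rw [indicator_of_mem hx, if_pos hx.1, if_pos (sub_pos.2 hx.2), exp_add]
  · rw [indicator_of_notMem hx]
    rcases not_and_or.1 hx with h | h <;> simp [h]

theorem norm_expDensity_mul_mul_abs_sub_div_add_le (φ : ℝ → ℝ) (x y : ℝ) :
    ‖expDensity φ x * expDensity φ y * (|x - y| / (x + y))‖
      ≤ expDensity φ x * expDensity φ y := by
  unfold expDensity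
  split_ifs with hx hy hy
  · rw [norm_mul, norm_of_nonneg (by positivity), norm_of_nonneg (by positivity)]
    exact mul_le_of_le_one_right (by positivity)
      ((div_le_one (by linarith)).2 (abs_sub_le_iff.2 ⟨by linarith, by linarith⟩))
  all_goals simp

theorem ConvexOn.setIntegral_expDensity_mul_sub_half_nonneg {φ : ℝ → ℝ}
    (hφ : ConvexOn ℝ (Ioi 0) φ) (d : ℝ) :
    0 ≤ ∫ p in {p : ℝ × ℝ | p.1 + p.2 > d},
      expDensity φ p.1 * expDensity φ p.2 * (|p.1 - p.2| / (p.1 + p.2) - 1 / 2) := by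
  set B := {p : ℝ × ℝ | p.1 + p.2 > d}
  set J := B.indicator fun p : ℝ × ℝ =>
    expDensity φ p.1 * expDensity φ p.2 * (|p.1 - p.2| / (p.1 + p.2) - 1 / 2)
  rw [← integral_indicator (measurableSet_lt measurable_const (by fun_prop))]
  by_cases hJ : Integrable J
  · rw [integral_eq_integral_integral_sub hJ]
    refine integral_nonneg fun s => ?_
    by_cases hs : s > d
    · have hslice : (fun x => J (x, s - x)) = (Ioo 0 s).indicator
          fun x => exp (φ x + φ (s - x)) * (|2 * x - s| / s - 1 / 2) := by
        ext x
        simp only [J]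
        rw [indicator_of_mem (show (x, s - x) ∈ B by simpa [B] using hs),
          expDensity_mul_expDensity_sub, indicator_mul_left, add_sub_cancel,
          show x - (s - x) = 2 * x - s by ring]
      simp only [hslice, integral_indicator measurableSet_Ioo]
      exact hφ.setIntegral_exp_add_comp_sub_mul_nonneg s
    · have hslice : (fun x => J (x, s - x)) = 0 := by
        ext x
        exact indicator_of_notMem (by simpa [B] using hs) _
      simp [hslice]
  · exact (integral_undef hJ).ge

theorem ConvexOn.half_measureReal_le_setIntegral_abs_sub_div_add {φ : ℝ → ℝ}
    (hφ : ConvexOn ℝ (Ioi 0) φ) [IsFiniteMeasure (expDensityMeasure φ)] (d : ℝ) :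
    1 / 2 * ((expDensityMeasure φ).prod (expDensityMeasure φ)).real {p | p.1 + p.2 > d}
      ≤ ∫ p in {p : ℝ × ℝ | p.1 + p.2 > d}, |p.1 - p.2| / (p.1 + p.2)
        ∂(expDensityMeasure φ).prod (expDensityMeasure φ) := by
  set μ := expDensityMeasure φ
  set f := expDensity φ
  set B := {p : ℝ × ℝ | p.1 + p.2 > d}
  have hB : MeasurableSet B := measurableSet_lt measurable_const (by fun_prop)
  have hfm : Measurable f := measurable_expDensity (hφ.continuousOn isOpen_Ioi)
  have : IsFiniteMeasure (volume.withDensity fun x => ENNReal.ofReal (f x)) := ‹_›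
  have hf : Integrable f := integrable_of_isFiniteMeasure_withDensity
    hfm.aestronglyMeasurable (ae_of_all _ (expDensity_nonneg φ))
  have hprod : μ.prod μ = volume.withDensity fun p => ENNReal.ofReal (f p.1 * f p.2) := by
    simp only [μ, expDensityMeasure]
    rw [prod_withDensity hfm.ennreal_ofReal hfm.ennreal_ofReal,
      ← Measure.volume_eq_prod]
    congr with p
    rw [ENNReal.ofReal_mul (expDensity_nonneg φ _)]
  have hdensity : ∀ g : ℝ × ℝ → ℝ,
      ∫ p in B, g p ∂μ.prod μ = ∫ p in B, f p.1 * f p.2 * g p := fun g => by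
    rw [hprod, setIntegral_withDensity_eq_setIntegral_toReal_smul (by fun_prop)
      (ae_of_all _ fun _ => ENNReal.ofReal_lt_top) g hB]
    refine setIntegral_congr_fun hB fun p _ => ?_
    rw [ENNReal.toReal_ofReal (mul_nonneg (expDensity_nonneg φ _) (expDensity_nonneg φ _)),
      smul_eq_mul]
  have hq : Integrable fun p : ℝ × ℝ => f p.1 * f p.2 := hf.mul_prod hf
  have hqh : IntegrableOn (fun p : ℝ × ℝ => f p.1 * f p.2 * (|p.1 - p.2| / (p.1 + p.2))) B :=
    hq.integrableOn.mono' (by fun_prop)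
      (ae_of_all _ fun p => norm_expDensity_mul_mul_abs_sub_div_add_le φ p.1 p.2)
  have hkey := hφ.setIntegral_expDensity_mul_sub_half_nonneg d
  simp_rw [mul_sub, mul_one_div] at hkey
  rw [integral_sub hqh (hq.integrableOn.div_const 2), integral_div] at hkey
  have hmass : (μ.prod μ).real B = ∫ p in B, f p.1 * f p.2 := by
    simpa using hdensity fun _ => 1
  rw [hmass, hdensity]
  linarith

theorem g_ge_half_of_logConvex_general {Ω : Type*} [MeasurableSpace Ω] (P : Measure Ω)
    [IsProbabilityMeasure P] (X₁ X₂ : Ω → ℝ) (hX₁ : Measurable X₁) (hX₂ : Measurable X₂)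
    (hindep : IndepFun X₁ X₂ P) (φ : ℝ → ℝ)
    (hconv : ConvexOn ℝ (Set.Ioi (0:ℝ)) φ)
    (hlaw₁ : Measure.map X₁ P
      = volume.withDensity (fun x => ENNReal.ofReal (if 0 < x then Real.exp (φ x) else 0)))
    (hlaw₂ : Measure.map X₂ P
      = volume.withDensity (fun x => ENNReal.ofReal (if 0 < x then Real.exp (φ x) else 0)))
    (d : ℝ) (hP : 0 < P {ω | X₁ ω + X₂ ω > d}) :
    1 / 2 ≤ (∫ ω in {ω | X₁ ω + X₂ ω > d}, |X₁ ω - X₂ ω| / (X₁ ω + X₂ ω) ∂P)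
      / (P {ω | X₁ ω + X₂ ω > d}).toReal := by
  have hjoint : P.map (fun ω => (X₁ ω, X₂ ω))
      = (expDensityMeasure φ).prod (expDensityMeasure φ) := by
    rw [hindep.map_prod_eq_prod_map_map hX₁.aemeasurable hX₂.aemeasurable, hlaw₁, hlaw₂]
    rfl
  have hlaw : P.map X₁ = expDensityMeasure φ := hlaw₁
  have : IsProbabilityMeasure (expDensityMeasure φ) :=
    hlaw ▸ Measure.isProbabilityMeasure_map hX₁.aemeasurable
  have hB : MeasurableSet {p : ℝ × ℝ | p.1 + p.2 > d} :=
    measurableSet_lt measurable_const (by fun_prop)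
  have hX : Measurable fun ω => (X₁ ω, X₂ ω) := hX₁.prodMk hX₂
  have hmass : (P {ω | X₁ ω + X₂ ω > d}).toReal
      = ((expDensityMeasure φ).prod (expDensityMeasure φ)).real {p | p.1 + p.2 > d} := by
    rw [← hjoint, map_measureReal_apply hX hB]
    rfl
  have hint : ∫ ω in {ω | X₁ ω + X₂ ω > d}, |X₁ ω - X₂ ω| / (X₁ ω + X₂ ω) ∂P
      = ∫ p in {p : ℝ × ℝ | p.1 + p.2 > d}, |p.1 - p.2| / (p.1 + p.2)
        ∂(expDensityMeasure φ).prod (expDensityMeasure φ) := by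
    rw [← hjoint,
      setIntegral_map hB (Measurable.aestronglyMeasurable (by fun_prop)) hX.aemeasurable]
    rfl
  rw [hint, hmass, le_div_iff₀ (hmass ▸ ENNReal.toReal_pos hP.ne' (measure_ne_top _ _))]
  linarith [hconv.half_measureReal_le_setIntegral_abs_sub_div_add d]

/-- For i.i.d. random variables with a log-convex density on `(0,∞)`,
`E[|X₁−X₂|/(X₁+X₂) | X₁+X₂ > d] ≥ 1/2` for every `d > 0` with positive probability. -/
theorem g_ge_half_of_logConvex {Ω : Type*} [MeasurableSpace Ω] (P : Measure Ω)
    [IsProbabilityMeasure P] (X₁ X₂ : Ω → ℝ) (hX₁ : Measurable X₁) (hX₂ : Measurable X₂)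
    (hindep : IndepFun X₁ X₂ P) (φ : ℝ → ℝ)
    (hconv : ConvexOn ℝ (Set.Ioi (0:ℝ)) φ)
    (hlaw₁ : Measure.map X₁ P
      = volume.withDensity (fun x => ENNReal.ofReal (if 0 < x then Real.exp (φ x) else 0)))
    (hlaw₂ : Measure.map X₂ P
      = volume.withDensity (fun x => ENNReal.ofReal (if 0 < x then Real.exp (φ x) else 0)))
    (d : ℝ) (hd : 0 < d) (hP : 0 < P {ω | X₁ ω + X₂ ω > d}) :
    1 / 2 ≤ (∫ ω in {ω | X₁ ω + X₂ ω > d}, |X₁ ω - X₂ ω| / (X₁ ω + X₂ ω) ∂P)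
      / (P {ω | X₁ ω + X₂ ω > d}).toReal :=
  g_ge_half_of_logConvex_general P X₁ X₂ hX₁ hX₂ hindep φ hconv hlaw₁ hlaw₂ d hP
end

section
/- The minimum-variance unbiased estimator of Var(U_n) satisfies the algebraic identity (2/(n(n−1)))·(2(n−2)ζ̂_1 + ζ̂_2 − (2n−3)ζ̂_0) = U_n^2 − ζ̂_0, where ζ̂_0 = (1/n^{(4)}) Σ_{distinct i,j,k,l} h(X_i,X_j)h(X_k,X_l), ζ̂_1 = (1/n^{(3)}) Σ_{distinct i,j,k} h(X_i,X_j)h(X_i,X_k), ζ̂_2 = (1/C(n,2)) Σ_{i<j} h(X_i,X_j)^2, and U_n = (2/(n(n−1))) Σ_{i<j} h(X_i,X_j). -/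
/-!
Write `h i j` for `h(X_i, X_j)`, `r i = ∑_{j ≠ i} h i j` and `S = ∑_i r i = n(n-1) U_n`.
Fixing the first index, the sum over distinct triples defining `ζ̂₁` is
`∑_i (r i ^ 2 - ∑_{j ≠ i} h i j ^ 2)`. Fixing the first pair `i ≠ j`, the sum of `h k l` over
`k ≠ l` outside `{i, j}` is `S - 2 r i - 2 r j + 2 h i j` by symmetry, so the sum over distinct
quadruples defining `ζ̂₀` is `S ^ 2 - 4 ∑_i r i ^ 2 + 2 ∑_{i ≠ j} h i j ^ 2`. Eliminating
`∑_i r i ^ 2` expresses `U_n ^ 2` through `ζ̂₀, ζ̂₁, ζ̂₂`, and what remains is a rational identity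
in `n`.
-/

open Finset

namespace Finset

theorem sum_filter_ne_eq_two_mul_sum_filter_lt {ι R : Type*} [Fintype ι] [LinearOrder ι]
    [NonAssocSemiring R] (f : ι → ι → R) (hf : ∀ i j, f i j = f j i) :
    ∑ p ∈ univ.filter (fun p : ι × ι => p.1 ≠ p.2), f p.1 p.2
      = 2 * ∑ p ∈ univ.filter (fun p : ι × ι => p.1 < p.2), f p.1 p.2 := by
  have hsplit : univ.filter (fun p : ι × ι => p.1 ≠ p.2)
      = univ.filter (fun p : ι × ι => p.1 < p.2) ∪ univ.filter (fun p : ι × ι => p.2 < p.1) := by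
    rw [← filter_or]
    exact filter_congr fun p _ => ne_iff_lt_or_gt
  rw [hsplit, sum_union (disjoint_filter.2 fun p _ h => h.asymm), two_mul]
  congr 1
  exact sum_equiv (Equiv.prodComm ι ι) (by simp) fun p _ => hf _ _

variable {ι M R : Type*} [Fintype ι] [DecidableEq ι]

section Reindex

variable [AddCommMonoid M]

theorem sum_filter_ne_eq_sum_sum_erase (f : ι → ι → M) :
    ∑ p ∈ univ.filter (fun p : ι × ι => p.1 ≠ p.2), f p.1 p.2
      = ∑ i, ∑ j ∈ univ.erase i, f i j :=
  sum_finset_product' _ _ _ fun p => by simp [eq_comm]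

theorem sum_filter_distinct₃_eq_sum_sum_erase (f : ι → ι → ι → M) :
    ∑ t ∈ univ.filter
        (fun t : ι × ι × ι => t.1 ≠ t.2.1 ∧ t.1 ≠ t.2.2 ∧ t.2.1 ≠ t.2.2),
        f t.1 t.2.1 t.2.2
      = ∑ i, ∑ j ∈ univ.erase i, ∑ k ∈ (univ.erase i).erase j, f i j k := by
  rw [sum_finset_product _ univ
    (fun i => univ.filter fun q : ι × ι => i ≠ q.1 ∧ i ≠ q.2 ∧ q.1 ≠ q.2) (fun t => by simp)]
  refine sum_congr rfl fun i _ => sum_finset_product' (f := f i) _ _ _ fun q => ?_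
  simp only [mem_filter, mem_univ, true_and, mem_erase]
  tauto

theorem sum_filter_distinct₄_eq_sum_sum_erase (f : ι → ι → ι → ι → M) :
    ∑ t ∈ univ.filter
        (fun t : ι × ι × ι × ι =>
          t.1 ≠ t.2.1 ∧ t.1 ≠ t.2.2.1 ∧ t.1 ≠ t.2.2.2 ∧
          t.2.1 ≠ t.2.2.1 ∧ t.2.1 ≠ t.2.2.2 ∧ t.2.2.1 ≠ t.2.2.2),
        f t.1 t.2.1 t.2.2.1 t.2.2.2
      = ∑ i, ∑ j ∈ univ.erase i, ∑ k ∈ (univ.erase i).erase j,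
          ∑ l ∈ ((univ.erase k).erase i).erase j, f i j k l := by
  rw [sum_finset_product _ univ (fun i => univ.filter fun q : ι × ι × ι =>
      i ≠ q.1 ∧ i ≠ q.2.1 ∧ i ≠ q.2.2 ∧ q.1 ≠ q.2.1 ∧ q.1 ≠ q.2.2 ∧ q.2.1 ≠ q.2.2)
      (fun t => by simp)]
  refine sum_congr rfl fun i _ => ?_
  rw [sum_finset_product _ (univ.erase i) (fun j => univ.filter fun q : ι × ι =>
      i ≠ q.1 ∧ i ≠ q.2 ∧ j ≠ q.1 ∧ j ≠ q.2 ∧ q.1 ≠ q.2)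
      (fun q => by simp only [mem_filter, mem_univ, true_and, mem_erase]; tauto)]
  refine sum_congr rfl fun j _ => sum_finset_product' (f := f i j) _ _ _ fun q => ?_
  simp only [mem_filter, mem_univ, true_and, mem_erase]
  tauto

end Reindex

section RowSums

variable [CommRing R] (g : ι → ι → R)

theorem sum_filter_distinct₃_mul_eq :
    ∑ t ∈ univ.filter
        (fun t : ι × ι × ι => t.1 ≠ t.2.1 ∧ t.1 ≠ t.2.2 ∧ t.2.1 ≠ t.2.2),
        g t.1 t.2.1 * g t.1 t.2.2
      = ∑ i, (∑ j ∈ univ.erase i, g i j) ^ 2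
          - ∑ p ∈ univ.filter (fun p : ι × ι => p.1 ≠ p.2), g p.1 p.2 ^ 2 := by
  rw [sum_filter_distinct₃_eq_sum_sum_erase (fun i j k => g i j * g i k),
    sum_filter_ne_eq_sum_sum_erase (fun i j => g i j ^ 2), ← sum_sub_distrib]
  refine sum_congr rfl fun i _ => ?_
  rw [sq, sum_mul, ← sum_sub_distrib]
  refine sum_congr rfl fun j hj => ?_
  rw [← mul_sum, sum_erase_eq_sub hj]
  ring

variable {g}

theorem sum_sum_erase_erase_of_symm (hg : ∀ i j, g i j = g j i) {i j : ι} (hij : i ≠ j) :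
    ∑ k ∈ (univ.erase i).erase j, ∑ l ∈ ((univ.erase k).erase i).erase j, g k l
      = ∑ k, ∑ l ∈ univ.erase k, g k l - 2 * ∑ l ∈ univ.erase i, g i l
          - 2 * ∑ l ∈ univ.erase j, g j l + 2 * g i j := by
  have row : ∀ k ∈ (univ.erase i).erase j,
      ∑ l ∈ ((univ.erase k).erase i).erase j, g k l
        = ∑ l ∈ univ.erase k, g k l - g i k - g j k := by
    intro k hk
    simp only [mem_erase, mem_univ, and_true] at hk
    rw [sum_erase_eq_sub (by simp [hij.symm, Ne.symm hk.1]),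
      sum_erase_eq_sub (by simp [Ne.symm hk.2]), hg k i, hg k j]
  have hj : j ∈ univ.erase i := by simp [hij.symm]
  have hi : i ∈ univ.erase j := by simp [hij]
  rw [sum_congr rfl row, sum_sub_distrib, sum_sub_distrib, sum_erase_eq_sub hj,
    sum_erase_eq_sub hj, sum_erase_eq_sub (mem_univ i), erase_right_comm, sum_erase_eq_sub hi,
    hg j i]
  ring

theorem sum_filter_distinct₄_mul_eq_of_symm (hg : ∀ i j, g i j = g j i) :
    ∑ t ∈ univ.filter
        (fun t : ι × ι × ι × ι =>
          t.1 ≠ t.2.1 ∧ t.1 ≠ t.2.2.1 ∧ t.1 ≠ t.2.2.2 ∧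
          t.2.1 ≠ t.2.2.1 ∧ t.2.1 ≠ t.2.2.2 ∧ t.2.2.1 ≠ t.2.2.2),
        g t.1 t.2.1 * g t.2.2.1 t.2.2.2
      = (∑ i, ∑ j ∈ univ.erase i, g i j) ^ 2 - 4 * ∑ i, (∑ j ∈ univ.erase i, g i j) ^ 2
          + 2 * ∑ p ∈ univ.filter (fun p : ι × ι => p.1 ≠ p.2), g p.1 p.2 ^ 2 := by
  set r : ι → R := fun i => ∑ j ∈ univ.erase i, g i j
  have cross : ∑ i, ∑ j ∈ univ.erase i, g i j * r j = ∑ j, r j ^ 2 := by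
    rw [sum_comm' (t' := univ) (s' := fun j => univ.erase j) (by simp [eq_comm])]
    refine sum_congr rfl fun j _ => ?_
    rw [← sum_mul, sq]
    exact congrArg (· * r j) (sum_congr rfl fun i _ => hg i j)
  have outer : ∀ i, ∑ j ∈ univ.erase i, ∑ k ∈ (univ.erase i).erase j,
      ∑ l ∈ ((univ.erase k).erase i).erase j, g i j * g k l
        = r i * ∑ k, r k - 2 * r i ^ 2 - 2 * ∑ j ∈ univ.erase i, g i j * r j
          + 2 * ∑ j ∈ univ.erase i, g i j ^ 2 := by
    intro i
    calc _ = ∑ j ∈ univ.erase i, g i j * (∑ k, r k - 2 * r i - 2 * r j + 2 * g i j) := by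
          refine sum_congr rfl fun j hj => ?_
          simp_rw [← mul_sum]
          rw [sum_sum_erase_erase_of_symm hg (ne_of_mem_erase hj).symm]
      _ = ∑ j ∈ univ.erase i,
            ((∑ k, r k - 2 * r i) * g i j - 2 * (g i j * r j) + 2 * g i j ^ 2) :=
          sum_congr rfl fun j _ => by ring
      _ = _ := by
          rw [sum_add_distrib, sum_sub_distrib, ← mul_sum, ← mul_sum, ← mul_sum]
          ring
  rw [sum_filter_distinct₄_eq_sum_sum_erase (fun i j k l => g i j * g k l),
    sum_filter_ne_eq_sum_sum_erase (fun i j => g i j ^ 2), sum_congr rfl fun i _ => outer i]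
  simp only [sum_add_distrib, sum_sub_distrib, ← sum_mul, ← mul_sum, cross]
  ring

end RowSums

end Finset

/-- The unbiased variance estimator identity
`(2/(n(n−1)))·(2(n−2)ζ̂₁ + ζ̂₂ − (2n−3)ζ̂₀) = U_n² − ζ̂₀` for `n ≥ 4`. -/
theorem unbiased_variance_estimator_identity (n : ℕ) (hn : 4 ≤ n) (x : Fin n → ℝ)
    (h : ℝ → ℝ → ℝ) (hsymm : ∀ a b, h a b = h b a)
    (ζ₀ ζ₁ ζ₂ U : ℝ)
    (hζ₀ : ζ₀ = (1 / ((n : ℝ) * ((n : ℝ) - 1) * ((n : ℝ) - 2) * ((n : ℝ) - 3))) *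
        ∑ t ∈ Finset.univ.filter
            (fun t : Fin n × Fin n × Fin n × Fin n =>
              t.1 ≠ t.2.1 ∧ t.1 ≠ t.2.2.1 ∧ t.1 ≠ t.2.2.2 ∧
              t.2.1 ≠ t.2.2.1 ∧ t.2.1 ≠ t.2.2.2 ∧ t.2.2.1 ≠ t.2.2.2),
          h (x t.1) (x t.2.1) * h (x t.2.2.1) (x t.2.2.2))
    (hζ₁ : ζ₁ = (1 / ((n : ℝ) * ((n : ℝ) - 1) * ((n : ℝ) - 2))) *
        ∑ t ∈ Finset.univ.filter
            (fun t : Fin n × Fin n × Fin n => t.1 ≠ t.2.1 ∧ t.1 ≠ t.2.2 ∧ t.2.1 ≠ t.2.2),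
          h (x t.1) (x t.2.1) * h (x t.1) (x t.2.2))
    (hζ₂ : ζ₂ = (1 / (n.choose 2 : ℝ)) *
        ∑ p ∈ Finset.univ.filter (fun p : Fin n × Fin n => p.1 < p.2),
          (h (x p.1) (x p.2)) ^ 2)
    (hU : U = (2 / ((n : ℝ) * ((n : ℝ) - 1))) *
        ∑ p ∈ Finset.univ.filter (fun p : Fin n × Fin n => p.1 < p.2),
          h (x p.1) (x p.2)) :
    (2 / ((n : ℝ) * ((n : ℝ) - 1))) *
        (2 * ((n : ℝ) - 2) * ζ₁ + ζ₂ - (2 * (n : ℝ) - 3) * ζ₀)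
      = U ^ 2 - ζ₀ := by
  have hg : ∀ i j, h (x i) (x j) = h (x j) (x i) := fun i j => hsymm _ _
  have hS := sum_filter_ne_eq_two_mul_sum_filter_lt _ hg
  have hQ := sum_filter_ne_eq_two_mul_sum_filter_lt (fun i j => h (x i) (x j) ^ 2)
    fun i j => by rw [hg]
  have hF := sum_filter_distinct₄_mul_eq_of_symm hg
  rw [← sum_filter_ne_eq_sum_sum_erase, hS, hQ] at hF
  rw [hζ₀, hζ₁, hζ₂, hU, hF, sum_filter_distinct₃_mul_eq (fun i j => h (x i) (x j)), hQ,
    Nat.cast_choose_two]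
  have hn4 : (4 : ℝ) ≤ n := by exact_mod_cast hn
  have : (n : ℝ) - 1 ≠ 0 := by linarith
  have : (n : ℝ) - 2 ≠ 0 := by linarith
  have : (n : ℝ) - 3 ≠ 0 := by linarith
  field_simp
  ring
end
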